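/- arXiv:2105.05363 — 3 statements merged into one kernel-verified Lean document; each statement's English description precedes it below -/
import Mathlib

section
/- Under the Gaussian linear model where the prior of x is N(μ', S) with S positive definite and the likelihood of y given x is N(Hx, Γ) with Γ positive definite, the posterior distribution of x given y is Gaussian with covariance (Hᵀ Γ^{-1} H + S^{-1})^{-1} and mean μ' + K(y − Hμ') where K = S Hᵀ (H S Hᵀ + Γ)^{-1}. -/
/-!
The posterior precision `A = HᵀΓ⁻¹H + S⁻¹` is read off by completing the square in the
exponent of prior × likelihood; its centre `m` solves `A m = S⁻¹μ' + HᵀΓ⁻¹y`, and the gain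
identity `A (S Hᵀ (H S Hᵀ + Γ)⁻¹) = HᵀΓ⁻¹` shows that `m = μ' + K(y − Hμ')` does. Everything
not depending on `x` is absorbed into the constant. -/

open Matrix

/-- Multivariate Gaussian density with mean `m` and covariance `S` on `Fin k → ℝ`. -/
noncomputable def gaussPdf {k : ℕ} (m : Fin k → ℝ) (S : Matrix (Fin k) (Fin k) ℝ)
    (x : Fin k → ℝ) : ℝ :=
  Real.exp (-(1 / 2) * dotProduct (x - m) (S⁻¹.mulVec (x - m))) /
    Real.sqrt ((2 * Real.pi) ^ k * S.det)

namespace Matrix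

section QuadraticForms

variable {ι κ R : Type*} [Fintype ι] [Fintype κ] [CommRing R]

theorem IsSymm.dotProduct_mulVec_comm {N : Matrix ι ι R} (hN : N.IsSymm) (u v : ι → R) :
    u ⬝ᵥ N *ᵥ v = v ⬝ᵥ N *ᵥ u := by
  rw [dotProduct_mulVec, ← mulVec_transpose, hN.eq, dotProduct_comm]

theorem mulVec_dotProduct_eq_dotProduct_transpose_mulVec (H : Matrix κ ι R) (u : ι → R)
    (w : κ → R) : (H *ᵥ u) ⬝ᵥ w = u ⬝ᵥ Hᵀ *ᵥ w := by
  rw [← vecMul_transpose, ← dotProduct_mulVec]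

theorem IsSymm.sub_dotProduct_mulVec_sub {N : Matrix ι ι R} (hN : N.IsSymm) (x m : ι → R) :
    (x - m) ⬝ᵥ N *ᵥ (x - m) = x ⬝ᵥ N *ᵥ x - 2 * (x ⬝ᵥ N *ᵥ m) + m ⬝ᵥ N *ᵥ m := by
  rw [sub_dotProduct, mulVec_sub, dotProduct_sub, dotProduct_sub, hN.dotProduct_mulVec_comm m x]
  ring

theorem IsSymm.complete_square {P : Matrix ι ι R} {Q : Matrix κ κ R} (hP : P.IsSymm)
    (hQ : Q.IsSymm) (H : Matrix κ ι R) {μ m : ι → R} {y : κ → R}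
    (hm : (Hᵀ * Q * H + P) *ᵥ m = P *ᵥ μ + (Hᵀ * Q) *ᵥ y) (x : ι → R) :
    (x - μ) ⬝ᵥ P *ᵥ (x - μ) + (y - H *ᵥ x) ⬝ᵥ Q *ᵥ (y - H *ᵥ x)
      = (x - m) ⬝ᵥ (Hᵀ * Q * H + P) *ᵥ (x - m)
        + (μ ⬝ᵥ P *ᵥ μ + y ⬝ᵥ Q *ᵥ y - m ⬝ᵥ (Hᵀ * Q * H + P) *ᵥ m) := by
  have hA : (Hᵀ * Q * H + P).IsSymm := by
    simp only [IsSymm, transpose_add, transpose_mul, transpose_transpose, hP.eq, hQ.eq,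
      Matrix.mul_assoc]
  have hquad : (H *ᵥ x) ⬝ᵥ Q *ᵥ (H *ᵥ x) = x ⬝ᵥ (Hᵀ * Q * H) *ᵥ x := by
    rw [mulVec_dotProduct_eq_dotProduct_transpose_mulVec, mulVec_mulVec, mulVec_mulVec]
  have hcross : y ⬝ᵥ Q *ᵥ (H *ᵥ x) = x ⬝ᵥ (Hᵀ * Q) *ᵥ y := by
    rw [hQ.dotProduct_mulVec_comm, mulVec_dotProduct_eq_dotProduct_transpose_mulVec,
      mulVec_mulVec]
  rw [hP.sub_dotProduct_mulVec_sub, hQ.sub_dotProduct_mulVec_sub,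
    hA.sub_dotProduct_mulVec_sub, hm, hquad, hcross, add_mulVec, dotProduct_add,
    dotProduct_add]
  ring

end QuadraticForms

section Gain

variable {ι κ R : Type*} [Fintype ι] [Fintype κ] [DecidableEq ι] [DecidableEq κ] [CommRing R]

theorem precision_mul_gain {S : Matrix ι ι R} {Γ : Matrix κ κ R} (H : Matrix κ ι R)
    (hS : IsUnit S.det) (hΓ : IsUnit Γ.det) (hM : IsUnit (H * S * Hᵀ + Γ).det) :
    (Hᵀ * Γ⁻¹ * H + S⁻¹) * (S * Hᵀ * (H * S * Hᵀ + Γ)⁻¹) = Hᵀ * Γ⁻¹ := by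
  have hSH : (Hᵀ * Γ⁻¹ * H + S⁻¹) * (S * Hᵀ) = Hᵀ * Γ⁻¹ * (H * S * Hᵀ + Γ) := by
    rw [Matrix.add_mul, Matrix.mul_add, ← Matrix.mul_assoc S⁻¹, nonsing_inv_mul S hS,
      Matrix.one_mul, Matrix.mul_assoc Hᵀ Γ⁻¹ Γ, nonsing_inv_mul Γ hΓ, Matrix.mul_one]
    simp only [Matrix.mul_assoc]
  rw [← Matrix.mul_assoc, hSH, Matrix.mul_assoc, mul_nonsing_inv _ hM, Matrix.mul_one]

theorem precision_mulVec_posteriorMean {S : Matrix ι ι R} {Γ : Matrix κ κ R}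
    (H : Matrix κ ι R) (hS : IsUnit S.det) (hΓ : IsUnit Γ.det)
    (hM : IsUnit (H * S * Hᵀ + Γ).det) (μ : ι → R) (y : κ → R) :
    (Hᵀ * Γ⁻¹ * H + S⁻¹) *ᵥ (μ + (S * Hᵀ * (H * S * Hᵀ + Γ)⁻¹) *ᵥ (y - H *ᵥ μ))
      = S⁻¹ *ᵥ μ + (Hᵀ * Γ⁻¹) *ᵥ y := by
  rw [mulVec_add, mulVec_mulVec, precision_mul_gain H hS hΓ hM, mulVec_sub, add_mulVec,
    mulVec_mulVec, Matrix.mul_assoc]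
  abel

end Gain

end Matrix

theorem exists_pos_gaussPdf_mul_gaussPdf_eq {p n : ℕ} {μ m : Fin p → ℝ} {y : Fin n → ℝ}
    {S A : Matrix (Fin p) (Fin p) ℝ} {Γ : Matrix (Fin n) (Fin n) ℝ} (hS : S.PosDef)
    (hΓ : Γ.PosDef) (hA : A.PosDef) (H : Matrix (Fin n) (Fin p) ℝ) (r : ℝ)
    (hq : ∀ x, (x - μ) ⬝ᵥ S⁻¹ *ᵥ (x - μ) + (y - H *ᵥ x) ⬝ᵥ Γ⁻¹ *ᵥ (y - H *ᵥ x)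
      = (x - m) ⬝ᵥ A *ᵥ (x - m) + r) :
    ∃ c : ℝ, 0 < c ∧ ∀ x, gaussPdf μ S x * gaussPdf (H *ᵥ x) Γ y = c * gaussPdf m A⁻¹ x := by
  have hSd := hS.det_pos
  have hΓd := hΓ.det_pos
  have hAd := hA.inv.det_pos
  refine ⟨Real.exp (-(1 / 2) * r) * Real.sqrt ((2 * Real.pi) ^ p * A⁻¹.det) /
      (Real.sqrt ((2 * Real.pi) ^ p * S.det) * Real.sqrt ((2 * Real.pi) ^ n * Γ.det)),
    by positivity, fun x => ?_⟩
  have hexp : -(1 / 2) * ((x - μ) ⬝ᵥ S⁻¹ *ᵥ (x - μ))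
      + -(1 / 2) * ((y - H *ᵥ x) ⬝ᵥ Γ⁻¹ *ᵥ (y - H *ᵥ x))
      = -(1 / 2) * ((x - m) ⬝ᵥ A *ᵥ (x - m)) + -(1 / 2) * r := by
    linarith [hq x]
  simp only [gaussPdf, nonsing_inv_nonsing_inv A hA.det_pos.ne'.isUnit]
  rw [div_mul_div_comm, ← Real.exp_add, hexp, Real.exp_add]
  field_simp

/-- Gaussian conjugacy. With prior `N(μ', S)` and likelihood
`N(Hx, Γ)` for `y`, the product of the prior density and likelihood is
proportional to the Gaussian density with covariance `(HᵀΓ⁻¹H + S⁻¹)⁻¹` and mean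
`μ' + K(y − Hμ')`, `K = S Hᵀ (H S Hᵀ + Γ)⁻¹`. -/
theorem stmt9 {p n : ℕ} (μ' : Fin p → ℝ) (y : Fin n → ℝ)
    (S : Matrix (Fin p) (Fin p) ℝ) (Γ : Matrix (Fin n) (Fin n) ℝ)
    (hS : S.PosDef) (hΓ : Γ.PosDef) (H : Matrix (Fin n) (Fin p) ℝ) :
    ∃ c : ℝ, 0 < c ∧ ∀ x : Fin p → ℝ,
      gaussPdf μ' S x * gaussPdf (H.mulVec x) Γ y
        = c * gaussPdf
            (μ' + (S * Hᵀ * (H * S * Hᵀ + Γ)⁻¹).mulVec (y - H.mulVec μ'))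
            ((Hᵀ * Γ⁻¹ * H + S⁻¹)⁻¹) x := by
  have hSd : IsUnit S.det := hS.det_pos.ne'.isUnit
  have hΓd : IsUnit Γ.det := hΓ.det_pos.ne'.isUnit
  have hA : (Hᵀ * Γ⁻¹ * H + S⁻¹).PosDef := by
    refine PosDef.posSemidef_add ?_ hS.inv
    simpa using hΓ.inv.posSemidef.conjTranspose_mul_mul_same H
  have hM : (H * S * Hᵀ + Γ).PosDef := by
    refine PosDef.posSemidef_add ?_ hΓ
    simpa using hS.posSemidef.mul_mul_conjTranspose_same H
  have hsymm {k : ℕ} {N : Matrix (Fin k) (Fin k) ℝ} (hN : N.PosDef) : N⁻¹.IsSymm :=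
    isHermitian_iff_isSymm.mp hN.inv.isHermitian
  exact exists_pos_gaussPdf_mul_gaussPdf_eq hS hΓ hA H _ <|
    (hsymm hS).complete_square (hsymm hΓ) H <|
      precision_mulVec_posteriorMean H hSd hΓd hM.det_pos.ne'.isUnit μ' y
end

section
/- Let x^a_{t-1} ∈ ℝ^p, δ = (ε n /(2N)) ∇ log π(x^a_{t-1}), Q = ε I_p, R = 2V with V symmetric positive definite, H ∈ ℝ^{n×p}, K = Q Hᵀ (H Q Hᵀ + R)^{-1}, and Σ = (n/N)(I − K H). Then x^a_{t-1} + δ + K(y − H x^a_{t-1} − H δ) = x^a_{t-1} + (ε/2) Σ [ (N/n) Hᵀ V^{-1} (y − H x^a_{t-1}) + ∇ log π(x^a_{t-1}) ]. -/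
/-!
Writing `S = H Q Hᵀ + R` for the innovation covariance, the gain `K = Q Hᵀ S⁻¹` satisfies
`K S = Q Hᵀ`, i.e. `K R = (I - K H) Q Hᵀ`, so `K = (I - K H) Q Hᵀ R⁻¹`. Hence the analysis mean
`x + δ + K (y - H x - H δ)` equals `x + (I - K H) (δ + Q Hᵀ R⁻¹ (y - H x))`. With `Q = ε I`,
`R = 2 V` and `δ = (ε n / 2N) ∇ log π(x)` this is the Langevin step preconditioned by
`Σ = (n / N) (I - K H)`; invertibility of `S` comes from `Q ⪰ 0`, `R ≻ 0`.
-/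

open Matrix

namespace Matrix

section KalmanGain

variable {m n 𝕜 : Type*} [Fintype m] [Fintype n] [DecidableEq m] [DecidableEq n] [CommRing 𝕜]
  {Q : Matrix m m 𝕜} {H : Matrix n m 𝕜} {R : Matrix n n 𝕜}

noncomputable def kalmanGain (Q : Matrix m m 𝕜) (H : Matrix n m 𝕜) (R : Matrix n n 𝕜) :
    Matrix m n 𝕜 :=
  Q * Hᵀ * (H * Q * Hᵀ + R)⁻¹

theorem kalmanGain_mul_eq (hS : IsUnit (H * Q * Hᵀ + R).det) :
    kalmanGain Q H R * R = (1 - kalmanGain Q H R * H) * Q * Hᵀ := by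
  have hKS : kalmanGain Q H R * (H * Q * Hᵀ + R) = Q * Hᵀ := by
    rw [kalmanGain, Matrix.mul_assoc, nonsing_inv_mul _ hS, Matrix.mul_one]
  rw [Matrix.mul_add] at hKS
  rw [Matrix.sub_mul, Matrix.sub_mul, Matrix.one_mul, ← hKS]
  simp only [Matrix.mul_assoc, add_sub_cancel_left]

theorem kalmanGain_eq (hS : IsUnit (H * Q * Hᵀ + R).det) (hR : IsUnit R.det) :
    kalmanGain Q H R = (1 - kalmanGain Q H R * H) * Q * Hᵀ * R⁻¹ := by
  rw [← kalmanGain_mul_eq hS, Matrix.mul_assoc, mul_nonsing_inv _ hR, Matrix.mul_one]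

theorem add_add_kalmanGain_mulVec (hS : IsUnit (H * Q * Hᵀ + R).det) (hR : IsUnit R.det)
    (x δ : m → 𝕜) (y : n → 𝕜) :
    x + δ + kalmanGain Q H R *ᵥ (y - H *ᵥ x - H *ᵥ δ)
      = x + (1 - kalmanGain Q H R * H) *ᵥ (δ + (Q * Hᵀ * R⁻¹) *ᵥ (y - H *ᵥ x)) := by
  set K := kalmanGain Q H R
  have hK : K *ᵥ (y - H *ᵥ x) = (1 - K * H) *ᵥ ((Q * Hᵀ * R⁻¹) *ᵥ (y - H *ᵥ x)) := by
    rw [mulVec_mulVec, ← Matrix.mul_assoc, ← Matrix.mul_assoc, ← kalmanGain_eq hS hR]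
  rw [mulVec_sub K (y - H *ᵥ x), hK, mulVec_add, sub_mulVec 1 (K * H) δ, one_mulVec,
    ← mulVec_mulVec δ K H]
  abel

end KalmanGain

theorem posDef_mul_mul_transpose_add {m n : Type*} [Fintype m] [Fintype n]
    {Q : Matrix m m ℝ} {R : Matrix n n ℝ} (hQ : Q.PosSemidef) (hR : R.PosDef) (H : Matrix n m ℝ) :
    (H * Q * Hᵀ + R).PosDef := by
  simpa [conjTranspose_eq_transpose_of_trivial] using
    PosDef.posSemidef_add (hQ.mul_mul_conjTranspose_same H) hR

end Matrix

/-- the EnKF mean update equals a preconditioned Langevin gradient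
step. Here `gl` stands for `∇ log π(x^a_{t-1})`. -/
theorem stmt10 {p n : ℕ} (ε nn NN : ℝ) (hε : 0 < ε) (hn : 0 < nn) (hN : 0 < NN)
    (V : Matrix (Fin n) (Fin n) ℝ) (hV : V.PosDef)
    (H : Matrix (Fin n) (Fin p) ℝ) (x gl : Fin p → ℝ) (y : Fin n → ℝ) :
    x + (ε * nn / (2 * NN)) • gl
      + ((ε • (1 : Matrix (Fin p) (Fin p) ℝ)) * Hᵀ
          * (H * (ε • (1 : Matrix (Fin p) (Fin p) ℝ)) * Hᵀ + (2 : ℝ) • V)⁻¹).mulVec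
        (y - H.mulVec x - H.mulVec ((ε * nn / (2 * NN)) • gl))
    = x + (ε / 2) •
        ((nn / NN) • ((1 : Matrix (Fin p) (Fin p) ℝ)
            - (ε • (1 : Matrix (Fin p) (Fin p) ℝ)) * Hᵀ
              * (H * (ε • (1 : Matrix (Fin p) (Fin p) ℝ)) * Hᵀ + (2 : ℝ) • V)⁻¹ * H)).mulVec
          ((NN / nn) • Hᵀ.mulVec (V⁻¹.mulVec (y - H.mulVec x)) + gl) := by
  have hV2 : ((2 : ℝ) • V).PosDef := hV.smul two_pos
  have hS := (posDef_mul_mul_transpose_add (PosSemidef.one.smul hε.le) hV2 H).det_pos.ne'.isUnit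
  have hVdet : IsUnit V.det := hV.det_pos.ne'.isUnit
  have hgain : (ε • (1 : Matrix (Fin p) (Fin p) ℝ)) * Hᵀ * ((2 : ℝ) • V)⁻¹
      = (ε / 2) • (Hᵀ * V⁻¹) := by
    rw [inv_smul _ (2 : ℝ) hVdet, invOf_eq_inv, div_eq_inv_mul]
    simp only [Matrix.mul_smul, Matrix.smul_mul, Matrix.one_mul, smul_smul]
  have hupdate :=
    add_add_kalmanGain_mulVec hS hV2.det_pos.ne'.isUnit x ((ε * nn / (2 * NN)) • gl) y
  rw [kalmanGain, hgain] at hupdate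
  rw [hupdate]
  simp only [smul_mulVec, mulVec_add, mulVec_smul, ← mulVec_mulVec, smul_add, smul_smul]
  match_scalars <;> field_simp
end

section
/- Let A, B, C ≥ 0 with A < 1 and B > 0, and let (W_k) be a sequence of nonnegative reals satisfying W_{k+1}² ≤ (A W_k + B)² + C² for all k. Then for every k, W_k ≤ A^k W_0 + B/(1−A) + C²/B. -/
/-- recursion-unrolling lemma. If `W_{k+1}² ≤ (A W_k + B)² + C²`
with `0 ≤ A < 1`, `B > 0`, `C ≥ 0`, then `W_k ≤ A^k W_0 + B/(1−A) + C²/B`. -/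
theorem stmt14 (A B C : ℝ) (hA0 : 0 ≤ A) (hA : A < 1) (hB : 0 < B) (hC : 0 ≤ C)
    (W : ℕ → ℝ) (hW : ∀ k, 0 ≤ W k)
    (hrec : ∀ k, W (k + 1) ^ 2 ≤ (A * W k + B) ^ 2 + C ^ 2) :
    ∀ k, W k ≤ A ^ k * W 0 + B / (1 - A) + C ^ 2 / B := by
  have h1A : 0 < 1 - A := by linarith
  intro k
  induction k with
  | zero =>
    simp only [pow_zero, one_mul]
    have h1 : 0 ≤ B / (1 - A) := le_of_lt (div_pos hB h1A)
    have h2 : 0 ≤ C ^ 2 / B := div_nonneg (sq_nonneg C) hB.le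
    linarith
  | succ k ih =>
    set D : ℝ := A ^ k * W 0 + B / (1 - A) + C ^ 2 / B with hD
    have hDge : B / (1 - A) ≤ D := by
      have h2 : 0 ≤ C ^ 2 / B := div_nonneg (sq_nonneg C) hB.le
      have h3 : 0 ≤ A ^ k * W 0 := mul_nonneg (pow_nonneg hA0 k) (hW 0)
      linarith
    have hWD : 0 ≤ A * W k + B := by nlinarith [mul_nonneg hA0 (hW k)]
    have hstep : W (k + 1) ^ 2 ≤ (A * D + B) ^ 2 + C ^ 2 := by
      have := hrec k
      have hmono : (A * W k + B) ^ 2 ≤ (A * D + B) ^ 2 := by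
        apply pow_le_pow_left₀ hWD
        nlinarith [ih]
      linarith
    have hDnext : A ^ (k + 1) * W 0 + B / (1 - A) + C ^ 2 / B
        = A * D + B + (1 - A) * C ^ 2 / B := by
      rw [hD]
      field_simp
      ring
    rw [hDnext]
    have hX : B / (1 - A) ≤ A * D + B := by
      have h3 : 0 ≤ A ^ k * W 0 := mul_nonneg (pow_nonneg hA0 k) (hW 0)
      have h2 : 0 ≤ C ^ 2 / B := div_nonneg (sq_nonneg C) hB.le
      have : A * (B / (1 - A)) + B = B / (1 - A) := by field_simp; ring
      nlinarith
    -- show (A*D+B)^2 + C^2 ≤ (A*D+B + (1-A)*C^2/B)^2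
    have hXB : B ≤ (1 - A) * (A * D + B) := by
      rw [div_le_iff₀ h1A] at hX
      linarith
    have hfin : (A * D + B) ^ 2 + C ^ 2 ≤ (A * D + B + (1 - A) * C ^ 2 / B) ^ 2 := by
      have hc : (1 - A) * C ^ 2 / B ≥ 0 := by positivity
      have ht : (1 - A) * C ^ 2 / B * B = (1 - A) * C ^ 2 := by
        field_simp
      have key : C ^ 2 ≤ 2 * (A * D + B) * ((1 - A) * C ^ 2 / B) := by
        nlinarith [mul_le_mul_of_nonneg_right hXB hc, mul_nonneg (mul_nonneg h1A.le (by nlinarith : (0:ℝ) ≤ A * D + B)) hc]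
      nlinarith [sq_nonneg ((1 - A) * C ^ 2 / B)]
    have hWnn := hW (k + 1)
    have hR : 0 ≤ A * D + B + (1 - A) * C ^ 2 / B := by
      have hc : 0 ≤ (1 - A) * C ^ 2 / B := by positivity
      have := div_pos hB h1A
      linarith
    have : W (k + 1) ^ 2 ≤ (A * D + B + (1 - A) * C ^ 2 / B) ^ 2 := le_trans hstep hfin
    exact (pow_le_pow_iff_left₀ hWnn hR two_ne_zero).mp this
end
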